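/- arXiv:1605.04505 — 5 statements merged into one kernel-verified Lean document; each statement's English description precedes it below -/
import Mathlib

section
/- For all m ≥ 3, the kernel numbers satisfy k_m = (t_m − 2t_{m−1} + t_{m−2} + 1)/2, i.e. 2k_m = t_m − 2t_{m−1} + t_{m−2} + 1, where t is the Tribonacci number sequence. -/
/-- Tribonacci numbers shifted by 2: `trib n` is `t_{n-2}`, so
`trib 0 = t₋₂ = 0`, `trib 1 = t₋₁ = 1`, `trib 2 = t₀ = 1`,
`trib 3 = t₁ = 2`, `trib 4 = t₂ = 4`, and
`trib (n+3) = trib (n+2) + trib (n+1) + trib n`. -/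
def trib : ℕ → ℤ
  | 0 => 0
  | 1 => 1
  | 2 => 1
  | n + 3 => trib (n + 2) + trib (n + 1) + trib n

/-- Kernel numbers: `ker 0 = 0`, `ker 1 = ker 2 = 1`,
`ker m = ker (m-1) + ker (m-2) + ker (m-3) - 1` for `m ≥ 3`. -/
def ker : ℕ → ℤ
  | 0 => 0
  | 1 => 1
  | 2 => 1
  | n + 3 => ker (n + 2) + ker (n + 1) + ker n - 1

lemma kernel_formula_aux (m : ℕ) :
    2 * ker m = trib (m + 2) - 2 * trib (m + 1) + trib m + 1 := by
  induction m using Nat.strong_induction_on with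
  | _ m ih =>
    match m with
    | 0 => decide
    | 1 => decide
    | 2 => decide
    | n + 3 =>
      have h0 := ih n (by omega)
      have h1 := ih (n+1) (by omega)
      have h2 := ih (n+2) (by omega)
      simp only [show n+1+2 = n+3 from rfl, show n+2+2 = n+1+3 from rfl,
        show n+1+1 = n+2 from rfl, show n+2+1 = n+3 from rfl] at h1 h2
      simp only [ker, show n+3+2 = n+2+3 from rfl, show n+3+1 = n+1+3 from rfl,
        show n+3 = n+3 from rfl, trib] at h1 h2 ⊢
      linarith

theorem kernel_formula (m : ℕ) (hm : 3 ≤ m) :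
    2 * ker m = trib (m + 2) - 2 * trib (m + 1) + trib m + 1 :=
  kernel_formula_aux m
end

section
/- Define Φ : ℕ → ℚ by Φ_4 = 3, Φ_5, Φ_6 given by the closed formula below, and satisfying the recurrence Φ_m = Φ_{m−1} + Φ_{m−2} + Φ_{m−3} + (−3t_m + 6t_{m−1} + t_{m−2} − 1)/2 for m ≥ 7. Then for all m ≥ 4, Φ_m = (m/22)(−5t_m + 14t_{m−1} + 4t_{m−2}) + (1/44)(67t_m − 166t_{m−1} + 5t_{m−2}) + 1/4. -/
/-- `tq m` is the Tribonacci number `t_m` as a rational number. -/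
def tq (m : ℕ) : ℚ := (trib (m + 2) : ℚ)

/-- The closed formula for `Φ_m`. -/
def cf (m : ℕ) : ℚ :=
  (m / 22) * (-5 * tq m + 14 * tq (m - 1) + 4 * tq (m - 2)) +
  (1 / 44) * (67 * tq m - 166 * tq (m - 1) + 5 * tq (m - 2)) + 1 / 4

lemma cf_rec (n : ℕ) : cf (n + 7) = cf (n + 6) + cf (n + 5) + cf (n + 4) +
    (-3 * tq (n + 7) + 6 * tq (n + 6) + tq (n + 5) - 1) / 2 := by
  have e9 : trib (n + 9) = trib (n + 8) + trib (n + 7) + trib (n + 6) := rfl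
  have e8 : trib (n + 8) = trib (n + 7) + trib (n + 6) + trib (n + 5) := rfl
  have e7 : trib (n + 7) = trib (n + 6) + trib (n + 5) + trib (n + 4) := rfl
  simp only [cf, tq, show n + 7 - 1 = n + 6 from rfl, show n + 7 - 2 = n + 5 from rfl,
    show n + 6 - 1 = n + 5 from rfl, show n + 6 - 2 = n + 4 from rfl,
    show n + 5 - 1 = n + 4 from rfl, show n + 5 - 2 = n + 3 from rfl,
    show n + 4 - 1 = n + 3 from rfl, show n + 4 - 2 = n + 2 from rfl,
    show n + 7 + 2 = n + 9 from rfl, show n + 6 + 2 = n + 8 from rfl,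
    show n + 5 + 2 = n + 7 from rfl, show n + 4 + 2 = n + 6 from rfl,
    show n + 3 + 2 = n + 5 from rfl, show n + 2 + 2 = n + 4 from rfl,
    e9, e8, e7]
  push_cast
  ring

theorem phi_closed_form (Φ : ℕ → ℚ) (h4 : Φ 4 = 3)
    (h5 : Φ 5 = cf 5) (h6 : Φ 6 = cf 6)
    (hrec : ∀ m, 7 ≤ m → Φ m = Φ (m - 1) + Φ (m - 2) + Φ (m - 3) +
      (-3 * tq m + 6 * tq (m - 1) + tq (m - 2) - 1) / 2) :
    ∀ m, 4 ≤ m → Φ m = cf m := by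
  have h4' : Φ 4 = cf 4 := by
    rw [h4]; norm_num [cf, tq, show trib 6 = 13 by decide, show trib 5 = 7 by decide, show trib 4 = 4 by decide]
  have key : ∀ n, Φ (n + 4) = cf (n + 4) ∧ Φ (n + 5) = cf (n + 5) ∧ Φ (n + 6) = cf (n + 6) := by
    intro n
    induction n with
    | zero => exact ⟨h4', h5, h6⟩
    | succ k ih =>
      obtain ⟨a, b, c⟩ := ih
      refine ⟨b, c, ?_⟩
      have := hrec (k + 7) (by omega)
      simp only [show k + 7 - 1 = k + 6 from rfl, show k + 7 - 2 = k + 5 from rfl,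
        show k + 7 - 3 = k + 4 from rfl] at this
      rw [show k + 1 + 6 = k + 7 from rfl, this, a, b, c, cf_rec]
  intro m hm
  obtain ⟨n, rfl⟩ : ∃ n, m = n + 4 := ⟨m - 4, by omega⟩
  exact (key n).1
end

section
/- Define S_1(m) = (m/22)(4t_m − 9t_{m−1} + 10t_{m−2}) + (1/44)(19t_m + 36t_{m−1} − 169t_{m−2}) − 1/4, S_2(m) = (m/22)(10t_m − 6t_{m−1} − 19t_{m−2}) + (1/44)(−189t_m + 156t_{m−1} + 331t_{m−2}) − 1/4, S_3(m) = (m/22)(−19t_m + 29t_{m−1} + 13t_{m−2}) + (1/44)(237t_m − 358t_{m−1} − 157t_{m−2}) + 3/4, and Φ_m = S_1(m) + S_2(m) + S_3(m). Then for all m ≥ 5: S_1(m) = Φ_{m−1} + k_m − 1, S_2(m) = Φ_{m−2} + k_m − 1, and S_3(m) = Φ_{m−3} + t_{m−4} − k_{m−3} + 1. -/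
/-- The closed formulas for `∑ a(Γ₁,ₘ,₁)`, `∑ a(Γ₂,ₘ,₁)`, `∑ a(Γ₃,ₘ,₁)`. -/
def S1 (m : ℕ) : ℚ :=
  ((m : ℚ) / 22) * (4 * tq m - 9 * tq (m - 1) + 10 * tq (m - 2)) +
  (1 / 44) * (19 * tq m + 36 * tq (m - 1) - 169 * tq (m - 2)) - 1 / 4

def S2 (m : ℕ) : ℚ :=
  ((m : ℚ) / 22) * (10 * tq m - 6 * tq (m - 1) - 19 * tq (m - 2)) +
  (1 / 44) * (-189 * tq m + 156 * tq (m - 1) + 331 * tq (m - 2)) - 1 / 4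

def S3 (m : ℕ) : ℚ :=
  ((m : ℚ) / 22) * (-19 * tq m + 29 * tq (m - 1) + 13 * tq (m - 2)) +
  (1 / 44) * (237 * tq m - 358 * tq (m - 1) - 157 * tq (m - 2)) + 3 / 4

def Phi (m : ℕ) : ℚ := S1 m + S2 m + S3 m

lemma trib_rec (n : ℕ) : trib (n + 3) = trib (n + 2) + trib (n + 1) + trib n := rfl

lemma tq_rec (n : ℕ) : tq (n + 3) = tq (n + 2) + tq (n + 1) + tq n := by
  simp only [tq]
  have : trib (n + 5) = trib (n + 4) + trib (n + 3) + trib (n + 2) := trib_rec (n + 2)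
  rw [show n + 3 + 2 = n + 5 from rfl, show n + 2 + 2 = n + 4 from rfl,
    show n + 1 + 2 = n + 3 from rfl, this]
  push_cast
  ring

/-- Closed form of the kernel numbers in terms of tribonacci numbers. -/
lemma kerz : ∀ n : ℕ, 2 * ker (n + 2) = trib (n + 4) - 2 * trib (n + 3) + trib (n + 2) + 1
  | 0 => by decide
  | 1 => by decide
  | 2 => by decide
  | n + 3 => by
      have h0 := kerz n
      have h1 := kerz (n + 1)
      have h2 := kerz (n + 2)
      simp only [show n+1+2=n+3 from rfl, show n+1+3=n+4 from rfl, show n+1+4=n+5 from rfl,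
        show n+2+2=n+4 from rfl, show n+2+3=n+5 from rfl, show n+2+4=n+6 from rfl,
        show n+3+2=n+5 from rfl, show n+3+3=n+6 from rfl, show n+3+4=n+7 from rfl] at h1 h2 ⊢
      have hk : ker (n + 5) = ker (n + 4) + ker (n + 3) + ker (n + 2) - 1 := rfl
      have ht7 : trib (n + 7) = trib (n + 6) + trib (n + 5) + trib (n + 4) := trib_rec (n + 4)
      have ht6 : trib (n + 6) = trib (n + 5) + trib (n + 4) + trib (n + 3) := trib_rec (n + 3)
      have ht5 : trib (n + 5) = trib (n + 4) + trib (n + 3) + trib (n + 2) := trib_rec (n + 2)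
      omega

lemma kerq (n : ℕ) :
    (ker (n + 2) : ℚ) = (tq (n + 2) - 2 * tq (n + 1) + tq n + 1) / 2 := by
  have := kerz n
  simp only [tq, show n + 2 + 2 = n + 4 from rfl, show n + 1 + 2 = n + 3 from rfl]
  have h : (2 : ℚ) * (ker (n + 2) : ℚ) =
      (trib (n + 4) : ℚ) - 2 * (trib (n + 3) : ℚ) + (trib (n + 2) : ℚ) + 1 := by
    exact_mod_cast this
  linarith

theorem sum_gamma_formulas (m : ℕ) (hm : 5 ≤ m) :
    S1 m = Phi (m - 1) + (ker m : ℚ) - 1 ∧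
    S2 m = Phi (m - 2) + (ker m : ℚ) - 1 ∧
    S3 m = Phi (m - 3) + tq (m - 4) - (ker (m - 3) : ℚ) + 1 := by
  obtain ⟨n, rfl⟩ : ∃ n, m = n + 5 := ⟨m - 5, by omega⟩
  have e1 : n + 5 - 1 = n + 4 := by omega
  have e2 : n + 5 - 2 = n + 3 := by omega
  have e3 : n + 5 - 3 = n + 2 := by omega
  have e4 : n + 5 - 4 = n + 1 := by omega
  have e5 : n + 4 - 1 = n + 3 := by omega
  have e6 : n + 4 - 2 = n + 2 := by omega
  have e7 : n + 3 - 1 = n + 2 := by omega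
  have e8 : n + 3 - 2 = n + 1 := by omega
  have e9 : n + 2 - 1 = n + 1 := by omega
  have e10 : n + 2 - 2 = n := by omega
  have ht5 : tq (n + 5) = tq (n + 4) + tq (n + 3) + tq (n + 2) := tq_rec (n + 2)
  have ht4 : tq (n + 4) = tq (n + 3) + tq (n + 2) + tq (n + 1) := tq_rec (n + 1)
  have ht3 : tq (n + 3) = tq (n + 2) + tq (n + 1) + tq n := tq_rec n
  have hk5 : (ker (n + 5) : ℚ) = (tq (n + 5) - 2 * tq (n + 4) + tq (n + 3) + 1) / 2 :=
    kerq (n + 3)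
  have hk2 : (ker (n + 2) : ℚ) = (tq (n + 2) - 2 * tq (n + 1) + tq n + 1) / 2 := kerq n
  have htn : tq n = tq (n + 3) - tq (n + 2) - tq (n + 1) := by linarith
  simp only [Phi, S1, S2, S3, e1, e2, e3, e4, e5, e6, e7, e8, e9, e10, hk5, hk2, ht5, ht4, htn]
  push_cast
  refine ⟨by ring, by ring, by ring⟩
end

section
/- Let Φ_j = (j/22)(−5t_j + 14t_{j−1} + 4t_{j−2}) + (1/44)(67t_j − 166t_{j−1} + 5t_{j−2}) + 1/4. Then for all m ≥ 5, the partial sum satisfies Σ_{j=4}^{m−1} Φ_j = (m/44)(13t_m − 10t_{m−1} + 5t_{m−2}) + (2/11)(−8t_m + 8t_{m−1} − 7t_{m−2}) + m/4 + 2. -/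
theorem sum_phi (m : ℕ) (hm : 5 ≤ m) :
    ∑ j ∈ Finset.Icc 4 (m - 1), cf j =
      ((m : ℚ) / 44) * (13 * tq m - 10 * tq (m - 1) + 5 * tq (m - 2)) +
      (2 / 11) * (-8 * tq m + 8 * tq (m - 1) - 7 * tq (m - 2)) +
      (m : ℚ) / 4 + 2 := by
  induction m, hm using Nat.le_induction with
  | base =>
      norm_num [cf, tq, trib]
  | succ m hm ih =>
      obtain ⟨k, rfl⟩ := Nat.exists_eq_add_of_le hm
      have h4 : 4 ≤ 5 + k - 1 + 1 := by omega
      have e1 : 5 + k + 1 - 1 = 5 + k - 1 + 1 := by omega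
      rw [e1, Finset.sum_Icc_succ_top h4, ih]
      simp only [show 5+k-1+1 = k+5 from by omega, show 5+k+1 = k+6 from by omega,
        show 5+k = k+5 from by omega, show 5+k-1 = k+4 from by omega,
        show 5+k-2 = k+3 from by omega]
      simp only [cf, tq]
      simp only [show k+5-1 = k+4 from by omega, show k+5-2 = k+3 from by omega,
        show k+6-1 = k+5 from by omega, show k+6-2 = k+4 from by omega,
        show k+4-1 = k+3 from by omega, show k+4-2 = k+2 from by omega]
      simp only [show k+6+2=k+8 from rfl, show k+5+2=k+7 from rfl,
        show k+4+2=k+6 from rfl, show k+3+2=k+5 from rfl]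
      have s8 : trib (k + 8) = trib (k + 7) + trib (k + 6) + trib (k + 5) := rfl
      have s7 : trib (k + 7) = trib (k + 6) + trib (k + 5) + trib (k + 4) := rfl
      have s6 : trib (k + 6) = trib (k + 5) + trib (k + 4) + trib (k + 3) := rfl
      have s5 : trib (k + 5) = trib (k + 4) + trib (k + 3) + trib (k + 2) := rfl
      rw [s8, s7, s6, s5]
      push_cast
      ring
end

section
/- For all m ≥ 7, θ_m^8 ≤ t_m < θ_m^9, where θ_m^8 = (t_m + 3t_{m−2} − 1)/2 and θ_m^9 = (−t_m + 4t_{m−1} + 3t_{m−2} − 1)/2. In other words, the Tribonacci number t_m lies in the sub-interval [θ_m^8, θ_m^9) of Γ_{1,m}. -/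
lemma trib_nonneg : ∀ n, 0 ≤ trib n
  | 0 => le_refl 0
  | 1 => one_pos.le
  | 2 => one_pos.le
  | n + 3 => by
      have h0 := trib_nonneg n
      have h1 := trib_nonneg (n + 1)
      have h2 := trib_nonneg (n + 2)
      show 0 ≤ trib (n + 2) + trib (n + 1) + trib n
      linarith

lemma trib_pos : ∀ n, 1 ≤ trib (n + 1)
  | 0 => le_refl 1
  | 1 => le_refl 1
  | n + 2 => by
      have h1 := trib_pos (n + 1)
      have h0 := trib_nonneg n
      have h2 := trib_nonneg (n + 1)
      show 1 ≤ trib (n + 2) + trib (n + 1) + trib n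
      linarith

theorem theta8_le_tm_lt_theta9 (m : ℕ) (hm : 7 ≤ m) :
    (tq m + 3 * tq (m - 2) - 1) / 2 ≤ tq m ∧
    tq m < (-tq m + 4 * tq (m - 1) + 3 * tq (m - 2) - 1) / 2 := by
  obtain ⟨k, rfl⟩ : ∃ k, m = k + 7 := ⟨m - 7, by omega⟩
  have h2 : k + 7 - 2 = k + 5 := by omega
  have h1 : k + 7 - 1 = k + 6 := by omega
  rw [h1, h2]
  simp only [tq]
  have e9 : trib (k + 9) = trib (k + 8) + trib (k + 7) + trib (k + 6) := rfl
  have e8 : trib (k + 8) = trib (k + 7) + trib (k + 6) + trib (k + 5) := rfl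
  have e7 : trib (k + 7) = trib (k + 6) + trib (k + 5) + trib (k + 4) := rfl
  have e6 : trib (k + 6) = trib (k + 5) + trib (k + 4) + trib (k + 3) := rfl
  have e5 : trib (k + 5) = trib (k + 4) + trib (k + 3) + trib (k + 2) := rfl
  have p2 : (1 : ℤ) ≤ trib (k + 2) := trib_pos (k + 1)
  have p3 : (1 : ℤ) ≤ trib (k + 3) := trib_pos (k + 2)
  have p4 : (1 : ℤ) ≤ trib (k + 4) := trib_pos (k + 3)
  have n5 : (0 : ℤ) ≤ trib (k + 5) := trib_nonneg _
  have n6 : (0 : ℤ) ≤ trib (k + 6) := trib_nonneg _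
  have key1 : 3 * trib (k + 7) ≤ trib (k + 9) + 1 := by
    rw [e9, e8, e7]; linarith
  have key2 : 2 * trib (k + 9) + 1 ≤ -trib (k + 9) + 4 * trib (k + 8) + 3 * trib (k + 7) - 1 := by
    rw [e9, e8, e7, e6, e5]; linarith
  constructor
  · rw [div_le_iff₀ (by norm_num : (0:ℚ) < 2)]
    have : ((3 * trib (k+7) : ℤ) : ℚ) ≤ ((trib (k+9) + 1 : ℤ) : ℚ) := by exact_mod_cast key1
    push_cast at this ⊢
    linarith
  · rw [lt_div_iff₀ (by norm_num : (0:ℚ) < 2)]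
    have : ((2 * trib (k+9) + 1 : ℤ) : ℚ) ≤ ((-trib (k+9) + 4 * trib (k+8) + 3 * trib (k+7) - 1 : ℤ) : ℚ) := by exact_mod_cast key2
    push_cast at this ⊢
    linarith
end
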